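/- arXiv:2312.14136 — 4 statements merged into one kernel-verified Lean document; each statement's English description precedes it below -/
import Mathlib

section
/- Let μ be a probability measure on ℝ^d, r > 0 and s ≥ 0. Then for every z ∈ ℝ^d, SD^r_s(z|μ) ∈ [0,1], and SD^r_s(z|μ) → 0 as ‖z‖ → ∞ (i.e., for every ε > 0 there is M > 0 such that ‖z‖ > M implies SD^r_s(z|μ) < ε). -/
/-!
At a center `c`, both variants of the depth are integrals `∫ k (‖x - c‖) dμ` of one kernel `k`
with values in `[0,1]` that vanishes at `+∞`: the indicator of `(-∞, r]` when `s = 0`, and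
`t ↦ sig_s (r² - t²)` when `s > 0`. Each such integral lies in `[0,1]` and, by dominated
convergence, tends to `0` as `‖c‖ → ∞`. Every center on the sphere of radius `r` about `z` has
norm at least `‖z‖ - r`, so the infimum is small for large `‖z‖`; the junk value `0` of an empty
or unbounded-below real infimum is harmless on both counts.
-/

open MeasureTheory

/-- The sigmoid function with scale `s`. -/
noncomputable def sig (s t : ℝ) : ℝ := 1 / (1 + Real.exp (-t / s))

/-- The sphere depth `SD^r_s(z|μ)`. For `s = 0` the sigmoid is replaced by the indicator
of `{x : ‖x − c‖ ≤ r}`, giving `SD^r_0(z|μ) = inf_{‖c−z‖=r} μ(B̄(c,r))`. -/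
noncomputable def SD (d : ℕ) (r s : ℝ) (z : EuclideanSpace ℝ (Fin d))
    (μ : Measure (EuclideanSpace ℝ (Fin d))) : ℝ :=
  if s = 0 then
    ⨅ c : Metric.sphere z r, (μ (Metric.closedBall (c : EuclideanSpace ℝ (Fin d)) r)).toReal
  else
    ⨅ c : Metric.sphere z r, ∫ x, sig s (r ^ 2 - ‖x - (c : EuclideanSpace ℝ (Fin d))‖ ^ 2) ∂μ

open Bornology Filter Set Topology

namespace Real

variable {ι : Sort*} {f : ι → ℝ} {a : ℝ}

lemma iInf_le_of_forall_le (ha : 0 ≤ a) (h : ∀ i, f i ≤ a) : ⨅ i, f i ≤ a := by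
  rcases isEmpty_or_nonempty ι with _ | ⟨⟨i⟩⟩
  · simpa using ha
  by_cases hf : BddBelow (range f)
  · exact (ciInf_le hf i).trans (h i)
  · rwa [iInf_of_not_bddBelow hf]

lemma iInf_lt_of_forall_lt (ha : 0 < a) (h : ∀ i, f i < a) : ⨅ i, f i < a := by
  rcases isEmpty_or_nonempty ι with _ | ⟨⟨i⟩⟩
  · simpa using ha
  by_cases hf : BddBelow (range f)
  · exact (ciInf_le hf i).trans_lt (h i)
  · rwa [iInf_of_not_bddBelow hf]

end Real

lemma integral_mem_Icc_zero_one {α : Type*} [MeasurableSpace α] (μ : Measure α)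
    [IsProbabilityMeasure μ] {f : α → ℝ} (hf : ∀ x, f x ∈ Icc 0 1) :
    ∫ x, f x ∂μ ∈ Icc 0 1 := by
  refine ⟨integral_nonneg fun x ↦ (hf x).1, ?_⟩
  have hnorm : ∀ x, ‖f x‖ ≤ 1 := fun x ↦ by
    rw [Real.norm_of_nonneg (hf x).1]; exact (hf x).2
  simpa using (le_abs_self _).trans (norm_integral_le_of_norm_le_const (μ := μ) (.of_forall hnorm))

lemma tendsto_integral_comp_norm_sub_cobounded {E : Type*} [NormedAddCommGroup E]
    [MeasurableSpace E] [OpensMeasurableSpace E] (μ : Measure E) [IsFiniteMeasure μ]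
    {g : ℝ → ℝ} {C : ℝ} (hgm : Measurable g) (hgC : ∀ t, ‖g t‖ ≤ C)
    (hg : Tendsto g atTop (𝓝 0)) :
    Tendsto (fun c ↦ ∫ x, g ‖x - c‖ ∂μ) (cobounded E) (𝓝 0) := by
  have : (cobounded E).IsCountablyGenerated := comap_norm_atTop (E := E) ▸ inferInstance
  have hlim : ∀ x : E, Tendsto (fun c ↦ g ‖x - c‖) (cobounded E) (𝓝 0) := fun x ↦
    hg.comp (tendsto_norm_cobounded_atTop.comp (tendsto_const_sub_cobounded x))
  simpa using tendsto_integral_filter_of_dominated_convergence (fun _ ↦ C)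
    (.of_forall fun c ↦ (hgm.comp (continuous_id.sub continuous_const).norm.measurable).aemeasurable
      |>.aestronglyMeasurable)
    (.of_forall fun c ↦ .of_forall fun x ↦ hgC _) (integrable_const C) (.of_forall hlim)

lemma sig_mem_Icc (s t : ℝ) : sig s t ∈ Icc 0 1 := by
  unfold sig
  refine ⟨by positivity, ?_⟩
  rw [div_le_one (by positivity)]
  linarith [Real.exp_pos (-t / s)]

lemma continuous_sig (s : ℝ) : Continuous (sig s) := by
  unfold sig
  exact continuous_const.div (by fun_prop) fun t ↦ by positivity

lemma tendsto_sig_atBot {s : ℝ} (hs : 0 < s) : Tendsto (sig s) atBot (𝓝 0) := by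
  have : Tendsto (fun t ↦ 1 + Real.exp (-t / s)) atBot atTop :=
    tendsto_atTop_add_const_left _ _ <| Real.tendsto_exp_atTop.comp <|
      (tendsto_neg_atBot_atTop.atTop_div_const hs)
  exact this.inv_tendsto_atTop.congr fun t ↦ by simp [sig]

noncomputable def sphereDepthKernel (r s : ℝ) : ℝ → ℝ :=
  if s = 0 then (Iic r).indicator 1 else fun t ↦ sig s (r ^ 2 - t ^ 2)

lemma sphereDepthKernel_mem_Icc (r s t : ℝ) : sphereDepthKernel r s t ∈ Icc 0 1 := by
  unfold sphereDepthKernel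
  split_ifs
  · by_cases ht : t ∈ Iic r <;> simp [ht]
  · exact sig_mem_Icc _ _

lemma measurable_sphereDepthKernel (r s : ℝ) : Measurable (sphereDepthKernel r s) := by
  unfold sphereDepthKernel
  split_ifs
  · exact measurable_const.indicator measurableSet_Iic
  · exact (continuous_sig s).measurable.comp (by fun_prop)

lemma tendsto_sphereDepthKernel_atTop (r : ℝ) {s : ℝ} (hs : 0 ≤ s) :
    Tendsto (sphereDepthKernel r s) atTop (𝓝 0) := by
  unfold sphereDepthKernel
  split_ifs with h0
  · refine tendsto_const_nhds.congr' ?_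
    filter_upwards [eventually_gt_atTop r] with t ht
    simp [ht]
  · exact (tendsto_sig_atBot (hs.lt_of_ne' h0)).comp <| tendsto_atBot_add_const_left _ _ <|
      tendsto_neg_atTop_atBot.comp (tendsto_pow_atTop two_ne_zero)

lemma SD_eq_iInf_integral_sphereDepthKernel (d : ℕ) (r s : ℝ) (z : EuclideanSpace ℝ (Fin d))
    (μ : Measure (EuclideanSpace ℝ (Fin d))) :
    SD d r s z μ = ⨅ c : Metric.sphere z r, ∫ x, sphereDepthKernel r s ‖x - c‖ ∂μ := by
  unfold SD sphereDepthKernel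
  split_ifs
  · congr! 2 with c
    rw [← measureReal_def, ← integral_indicator_one measurableSet_closedBall]
    congr with x
  · rfl

theorem stmt_2_general (d : ℕ) (μ : Measure (EuclideanSpace ℝ (Fin d))) [IsProbabilityMeasure μ]
    (r s : ℝ) (hs : 0 ≤ s) :
    (∀ z : EuclideanSpace ℝ (Fin d), SD d r s z μ ∈ Set.Icc (0 : ℝ) 1) ∧
    (∀ ε > (0 : ℝ), ∃ M > (0 : ℝ), ∀ z : EuclideanSpace ℝ (Fin d),
      M < ‖z‖ → SD d r s z μ < ε) := by
  have hk := sphereDepthKernel_mem_Icc r s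
  refine ⟨fun z ↦ ?_, fun ε hε ↦ ?_⟩
  · have hc (c : Metric.sphere z r) := integral_mem_Icc_zero_one μ fun x ↦ hk ‖x - c‖
    rw [SD_eq_iInf_integral_sphereDepthKernel]
    exact ⟨Real.iInf_nonneg fun c ↦ (hc c).1,
      Real.iInf_le_of_forall_le zero_le_one fun c ↦ (hc c).2⟩
  have hlim := tendsto_integral_comp_norm_sub_cobounded μ (measurable_sphereDepthKernel r s)
    (fun t ↦ (Real.norm_of_nonneg (hk t).1).trans_le (hk t).2)
    (tendsto_sphereDepthKernel_atTop r hs)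
  rw [← comap_norm_atTop] at hlim
  obtain ⟨M₀, hM₀⟩ :=
    eventually_atTop.1 (eventually_comap.1 (hlim.eventually (gt_mem_nhds hε)))
  refine ⟨|M₀| + |r| + 1, by positivity, fun z hz ↦ ?_⟩
  rw [SD_eq_iInf_integral_sphereDepthKernel]
  refine Real.iInf_lt_of_forall_lt hε fun c ↦ hM₀ ‖(c : EuclideanSpace ℝ (Fin d))‖ ?_ c rfl
  have hcz : ‖z - c‖ = r := by rw [← dist_eq_norm, ← Metric.mem_sphere']; exact c.2
  linarith [norm_sub_norm_le z c, le_abs_self M₀, le_abs_self r]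

/-- The sphere depth takes values in `[0,1]` and vanishes at infinity. -/
theorem stmt_2 (d : ℕ) (μ : Measure (EuclideanSpace ℝ (Fin d))) [IsProbabilityMeasure μ]
    (r s : ℝ) (hr : 0 < r) (hs : 0 ≤ s) :
    (∀ z : EuclideanSpace ℝ (Fin d), SD d r s z μ ∈ Set.Icc (0 : ℝ) 1) ∧
    (∀ ε > (0 : ℝ), ∃ M > (0 : ℝ), ∀ z : EuclideanSpace ℝ (Fin d),
      M < ‖z‖ → SD d r s z μ < ε) :=
  stmt_2_general d μ r s hs
end

section
/- Let μ be a probability measure on ℝ^d, z ∈ ℝ^d, r > 0, s > 0 and λ > 0, and let λ_♯μ denote the pushforward of μ under the scaling map x ↦ λx. Then SD^{λr}_0(λz | λ_♯μ) = SD^r_0(z | μ) and SD^{λr}_{λ²s}(λz | λ_♯μ) = SD^r_s(z | μ) (equivalently, SD^{λr}_s(λz | λ_♯μ) = SD^r_{s/λ²}(z | μ)). -/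
/-!
The dilation `x ↦ λ • x` maps the sphere `‖c - z‖ = r` onto the sphere `‖c - λz‖ = λr` and the
ball `B̄(c, r)` onto `B̄(λc, λr)`, and it multiplies `r² - ‖x - c‖²` by `λ²`; this factor cancels
against the scale `λ²s` of the sigmoid, since `sig s t` depends only on `t / s`.
-/

open MeasureTheory

lemma sig_mul_mul {c : ℝ} (hc : c ≠ 0) (s t : ℝ) : sig (c * s) (c * t) = sig s t := by
  rw [sig, sig, neg_div, neg_div, mul_div_mul_left _ _ hc]

section Dilation

open Metric

variable {E : Type*} [NormedAddCommGroup E] [NormedSpace ℝ E] {a : ℝ}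

lemma dist_smul_smul_of_pos (ha : 0 < a) (x y : E) : dist (a • x) (a • y) = a * dist x y := by
  rw [dist_smul₀, Real.norm_of_nonneg ha.le]

lemma iInf_sphere_smul {ι : Type*} [InfSet ι] (ha : 0 < a) (z : E) (r : ℝ) (f : E → ι) :
    ⨅ c : sphere (a • z) (a * r), f c = ⨅ c : sphere z r, f (a • c) := by
  let e : sphere z r ≃ sphere (a • z) (a * r) :=
    (Homeomorph.smulOfNeZero a ha.ne').toEquiv.subtypeEquiv fun c => by
      simp only [mem_sphere, Homeomorph.coe_toEquiv, Homeomorph.smulOfNeZero_apply,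
        dist_smul_smul_of_pos ha, mul_right_inj' ha.ne']
  exact (Equiv.iInf_comp (g := fun c : sphere (a • z) (a * r) => f c) e).symm

lemma smul_mem_closedBall_smul_iff (ha : 0 < a) {x c : E} {r : ℝ} :
    a • x ∈ closedBall (a • c) (a * r) ↔ x ∈ closedBall c r := by
  simp only [mem_closedBall, dist_smul_smul_of_pos ha, mul_le_mul_iff_right₀ ha]

variable [MeasurableSpace E] [BorelSpace E]

lemma map_smul_apply_closedBall_smul (μ : Measure E) (ha : 0 < a) (c : E) (r : ℝ) :
    μ.map (a • ·) (closedBall (a • c) (a * r)) = μ (closedBall c r) := by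
  rw [(measurableEmbedding_const_smul₀ ha.ne').map_apply]
  exact congrArg μ (Set.ext fun x => smul_mem_closedBall_smul_iff ha)

lemma integral_map_smul_sig (μ : Measure E) (ha : 0 < a) (c : E) (r s : ℝ) :
    ∫ x, sig (a ^ 2 * s) ((a * r) ^ 2 - ‖x - a • c‖ ^ 2) ∂μ.map (a • ·) =
      ∫ x, sig s (r ^ 2 - ‖x - c‖ ^ 2) ∂μ := by
  rw [(measurableEmbedding_const_smul₀ ha.ne').integral_map]
  congr 1 with x
  have hnorm : ‖a • x - a • c‖ = a * ‖x - c‖ := by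
    simpa only [dist_eq_norm] using dist_smul_smul_of_pos ha x c
  have hquad : (a * r) ^ 2 - (a * ‖x - c‖) ^ 2 = a ^ 2 * (r ^ 2 - ‖x - c‖ ^ 2) := by ring
  rw [hnorm, hquad, sig_mul_mul (pow_ne_zero 2 ha.ne')]

end Dilation

lemma SD_zero_map_smul (d : ℕ) (μ : Measure (EuclideanSpace ℝ (Fin d)))
    (z : EuclideanSpace ℝ (Fin d)) {r a : ℝ} (ha : 0 < a) :
    SD d (a * r) 0 (a • z) (μ.map (a • ·)) = SD d r 0 z μ := by
  rw [SD, SD, if_pos rfl, if_pos rfl,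
    iInf_sphere_smul ha z r fun c => (μ.map (a • ·) (Metric.closedBall c (a * r))).toReal]
  simp only [map_smul_apply_closedBall_smul μ ha]

lemma SD_map_smul (d : ℕ) (μ : Measure (EuclideanSpace ℝ (Fin d)))
    (z : EuclideanSpace ℝ (Fin d)) {r s a : ℝ} (hs : s ≠ 0) (ha : 0 < a) :
    SD d (a * r) (a ^ 2 * s) (a • z) (μ.map (a • ·)) = SD d r s z μ := by
  have has : a ^ 2 * s ≠ 0 := by positivity
  rw [SD, SD, if_neg has, if_neg hs,
    iInf_sphere_smul ha z r fun c =>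
      ∫ x, sig (a ^ 2 * s) ((a * r) ^ 2 - ‖x - c‖ ^ 2) ∂μ.map (a • ·)]
  simp only [integral_map_smul_sig μ ha]

theorem stmt_4_general (d : ℕ) (μ : Measure (EuclideanSpace ℝ (Fin d)))
    (z : EuclideanSpace ℝ (Fin d)) (r s lam : ℝ) (hs : 0 < s) (hlam : 0 < lam) :
    SD d (lam * r) 0 (lam • z) (μ.map (fun x => lam • x)) = SD d r 0 z μ ∧
    SD d (lam * r) (lam ^ 2 * s) (lam • z) (μ.map (fun x => lam • x)) = SD d r s z μ :=
  ⟨SD_zero_map_smul d μ z hlam, SD_map_smul d μ z hs.ne' hlam⟩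

/-- Scaling relation for the sphere depth: dilating the data, the point and the radius by
`λ` preserves the `s = 0` depth, and for `s > 0` corresponds to rescaling `s` by `λ²`. -/
theorem stmt_4 (d : ℕ) (μ : Measure (EuclideanSpace ℝ (Fin d))) [IsProbabilityMeasure μ]
    (z : EuclideanSpace ℝ (Fin d)) (r s lam : ℝ) (hr : 0 < r) (hs : 0 < s) (hlam : 0 < lam) :
    SD d (lam * r) 0 (lam • z) (μ.map (fun x => lam • x)) = SD d r 0 z μ ∧
    SD d (lam * r) (lam ^ 2 * s) (lam • z) (μ.map (fun x => lam • x)) = SD d r s z μ :=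
  stmt_4_general d μ z r s lam hs hlam
end

section
/- Fix z ∈ ℝ^d, r > 0, s > 0, and let F_z = { x ↦ sig_s(r² − ‖x − c‖²) : ‖c − z‖ = r }. There is a constant C > 0 (depending only on r and s) such that for every probability measure P on ℝ^d and every n ≥ 1, the Rademacher complexity satisfies R_{P,n}(F_z) ≤ C·√(d/n). -/
open MeasureTheory

/-- The uniform measure on `{±1}` signs, encoded on `Bool`. -/
noncomputable def signMeasure : Measure Bool := (PMF.uniformOfFintype Bool).toMeasure

/-- The Rademacher complexity `R_{P,n}(F) = E[ sup_{f ∈ F} (1/n) Σᵢ σᵢ f(Xᵢ) ]`, where the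
`Xᵢ` are i.i.d. with law `P` and the `σᵢ` are independent uniform `±1` signs. -/
noncomputable def radComp {E : Type*} [MeasurableSpace E] (P : Measure E) (n : ℕ)
    (F : Set (E → ℝ)) : ℝ :=
  ∫ x : Fin n → E, ∫ σ : Fin n → Bool,
      (⨆ f : F, (n : ℝ)⁻¹ * ∑ i, (if σ i then (1 : ℝ) else -1) * (f : E → ℝ) (x i))
    ∂(Measure.pi fun _ => signMeasure) ∂(Measure.pi fun _ => P)

/-- The class `F_z = { x ↦ sig_s(r² − ‖x − c‖²) : ‖c − z‖ = r }`. -/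
def Fz (d : ℕ) (r s : ℝ) (z : EuclideanSpace ℝ (Fin d)) :
    Set (EuclideanSpace ℝ (Fin d) → ℝ) :=
  {f | ∃ c : EuclideanSpace ℝ (Fin d), ‖c - z‖ = r ∧
    f = fun x => sig s (r ^ 2 - ‖x - c‖ ^ 2)}

/-!
Writing `c = z + u` with `‖u‖ = r` and `y = x - z`, the argument of the sigmoid is
`2⟪y, u⟫ - ‖y‖²`, which is at most `2r‖y‖ - ‖y‖²`. Hence the map `⟪y, u⟫ ↦ sig_s(…)` is
Lipschitz with a constant `K(y)` such that `K(y)‖y‖ ≤ 8r/s + 1/r` uniformly in `y`: for small `‖y‖`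
the sigmoid is `1/s`-Lipschitz, for large `‖y‖` it is exponentially flat where it is evaluated.
The Ledoux–Talagrand contraction principle reduces the class to the linear class
`u ↦ K(y)⟪y, u⟫` on the sphere of radius `r`, whose Rademacher complexity is at most
`r (8r/s + 1/r) / √n` by Cauchy–Schwarz and orthogonality of the signs.
-/

open Finset RealInnerProductSpace

lemma sig_nonneg (s t : ℝ) : 0 ≤ sig s t := by
  unfold sig; positivity

lemma sig_le_one (s t : ℝ) : sig s t ≤ 1 := by
  unfold sig
  rw [div_le_one (by positivity)]
  linarith [Real.exp_pos (-t / s)]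

lemma abs_sig_le_one (s t : ℝ) : |sig s t| ≤ 1 :=
  abs_le.2 ⟨by linarith [sig_nonneg s t], sig_le_one s t⟩

lemma sig_sub_sig (s a b : ℝ) :
    sig s a - sig s b = (Real.exp (-b / s) - Real.exp (-a / s)) /
      ((1 + Real.exp (-a / s)) * (1 + Real.exp (-b / s))) := by
  unfold sig
  field_simp
  ring

lemma exp_neg_div_eq (s a b : ℝ) :
    Real.exp (-a / s) = Real.exp (-b / s) * Real.exp (-((a - b) / s)) := by
  rw [← Real.exp_add]; ring_nf

lemma sig_sub_le {s : ℝ} (hs : 0 < s) {a b : ℝ} (hba : b ≤ a) :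
    sig s a - sig s b ≤ (a - b) / s := by
  have ha := Real.exp_pos (-a / s)
  have hb := Real.exp_pos (-b / s)
  have hab : Real.exp (-a / s) ≤ Real.exp (-b / s) := by gcongr
  calc sig s a - sig s b
      ≤ (Real.exp (-b / s) - Real.exp (-a / s)) / Real.exp (-b / s) := by
        rw [sig_sub_sig]
        gcongr
        nlinarith
    _ = 1 - Real.exp (-((a - b) / s)) := by
        rw [exp_neg_div_eq s a b]
        field_simp
    _ ≤ (a - b) / s := by linarith [Real.add_one_le_exp (-((a - b) / s))]

lemma sig_sub_le_exp {s : ℝ} (hs : 0 < s) {a b m : ℝ} (hba : b ≤ a) (ham : a ≤ m) :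
    sig s a - sig s b ≤ Real.exp (m / s) * ((a - b) / s) := by
  have ha := Real.exp_pos (-a / s)
  have hb := Real.exp_pos (-b / s)
  have hab : Real.exp (-a / s) ≤ Real.exp (-b / s) := by gcongr
  calc sig s a - sig s b
      ≤ (Real.exp (-b / s) - Real.exp (-a / s)) / (Real.exp (-a / s) * Real.exp (-b / s)) := by
        rw [sig_sub_sig]
        gcongr <;> linarith
    _ = Real.exp (a / s) * (1 - Real.exp (-((a - b) / s))) := by
        have : Real.exp (a / s) = (Real.exp (-a / s))⁻¹ := by rw [← Real.exp_neg]; ring_nf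
        rw [this, exp_neg_div_eq s a b]
        field_simp
    _ ≤ Real.exp (m / s) * ((a - b) / s) := by
        have : Real.exp (-((a - b) / s)) ≤ 1 :=
          Real.exp_le_one_iff.2 (neg_nonpos.2 (div_nonneg (sub_nonneg.2 hba) hs.le))
        gcongr
        linarith [Real.add_one_le_exp (-((a - b) / s))]

lemma sig_monotone {s : ℝ} (hs : 0 < s) : Monotone (sig s) := fun b a hba => by
  have : Real.exp (-a / s) ≤ Real.exp (-b / s) := by gcongr
  unfold sig
  gcongr

lemma abs_sig_sub_le {s : ℝ} (hs : 0 < s) (a b : ℝ) : |sig s a - sig s b| ≤ |a - b| / s := by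
  wlog hba : b ≤ a generalizing a b
  · rw [abs_sub_comm, abs_sub_comm a]
    exact this b a (le_of_not_ge hba)
  rw [abs_of_nonneg (sub_nonneg.2 (sig_monotone hs hba)), abs_of_nonneg (sub_nonneg.2 hba)]
  exact sig_sub_le hs hba

lemma abs_sig_sub_le_exp {s : ℝ} (hs : 0 < s) {a b m : ℝ} (ha : a ≤ m) (hb : b ≤ m) :
    |sig s a - sig s b| ≤ Real.exp (m / s) * (|a - b| / s) := by
  wlog hba : b ≤ a generalizing a b
  · rw [abs_sub_comm, abs_sub_comm a]
    exact this hb ha (le_of_not_ge hba)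
  rw [abs_of_nonneg (sub_nonneg.2 (sig_monotone hs hba)), abs_of_nonneg (sub_nonneg.2 hba)]
  exact sig_sub_le_exp hs hba ha

lemma exp_neg_le_inv {x : ℝ} (hx : 0 < x) : Real.exp (-x) ≤ x⁻¹ := by
  rw [Real.exp_neg]
  exact inv_anti₀ hx (by linarith [Real.add_one_le_exp x])

def boolSign (b : Bool) : ℝ := if b then 1 else -1

@[simp] lemma boolSign_not (b : Bool) : boolSign (!b) = -boolSign b := by
  cases b <;> simp [boolSign]

@[simp] lemma boolSign_mul_self (b : Bool) : boolSign b * boolSign b = 1 := by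
  cases b <;> simp [boolSign]

@[simp] lemma abs_boolSign (b : Bool) : |boolSign b| = 1 := by
  cases b <;> simp [boolSign]

lemma ciSup_add_add_ciSup_sub_le {T : Type*} [Nonempty T] {A F G : T → ℝ}
    (hG₁ : BddAbove (Set.range fun t => A t + G t)) (hG₂ : BddAbove (Set.range fun t => A t - G t))
    (hFG : ∀ t t', |F t - F t'| ≤ |G t - G t'|) :
    (⨆ t, A t + F t) + (⨆ t, A t - F t) ≤ (⨆ t, A t + G t) + (⨆ t, A t - G t) := by
  refine ciSup_add_ciSup_le fun t t' => ?_
  have h := (le_abs_self _).trans (hFG t t')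
  rcases abs_cases (G t - G t') with ⟨hG, -⟩ | ⟨hG, -⟩ <;> rw [hG] at h
  · calc _ ≤ (A t + G t) + (A t' - G t') := by linarith
      _ ≤ _ := add_le_add (le_ciSup hG₁ t) (le_ciSup hG₂ t')
  · calc _ ≤ (A t' + G t') + (A t - G t) := by linarith
      _ ≤ _ := add_le_add (le_ciSup hG₁ t') (le_ciSup hG₂ t)

section Signs

variable {ι : Type*}

section Flip

variable [DecidableEq ι]

def flipAt (k : ι) : Equiv.Perm (ι → Bool) :=
  Function.Involutive.toPerm (fun σ => Function.update σ k (!σ k)) fun σ => by simp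

@[simp] lemma flipAt_apply_self (k : ι) (σ : ι → Bool) : flipAt k σ k = !σ k :=
  Function.update_self _ _ _

lemma flipAt_apply_of_ne {i k : ι} (h : i ≠ k) (σ : ι → Bool) : flipAt k σ i = σ i :=
  Function.update_of_ne h _ _

end Flip

variable [Fintype ι]

lemma bddAbove_range_sum_boolSign_mul {T : Type*} {a : ι → T → ℝ} {M : ℝ}
    (ha : ∀ i t, |a i t| ≤ M) (σ : ι → Bool) :
    BddAbove (Set.range fun t => ∑ i, boolSign (σ i) * a i t) := by
  refine ⟨∑ _i : ι, M, ?_⟩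
  rintro _ ⟨t, rfl⟩
  refine sum_le_sum fun i _ => (le_abs_self _).trans ?_
  rw [abs_mul, abs_boolSign, one_mul]
  exact ha i t

variable [DecidableEq ι]

lemma sum_boolSign_mul_eq (σ : ι → Bool) (k : ι) (a : ι → ℝ) :
    ∑ i, boolSign (σ i) * a i
      = ∑ i ∈ univ.erase k, boolSign (σ i) * a i + boolSign (σ k) * a k :=
  (sum_erase_add _ _ (mem_univ k)).symm

lemma sum_boolSign_flipAt_mul_eq (σ : ι → Bool) (k : ι) (a : ι → ℝ) :
    ∑ i, boolSign (flipAt k σ i) * a i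
      = ∑ i ∈ univ.erase k, boolSign (σ i) * a i - boolSign (σ k) * a k := by
  rw [sum_boolSign_mul_eq _ k, flipAt_apply_self, boolSign_not, neg_mul, ← sub_eq_add_neg]
  congr 1
  exact sum_congr rfl fun i hi => by rw [flipAt_apply_of_ne (ne_of_mem_erase hi)]

lemma sum_iSup_sum_boolSign_mul_le_of_forall_ne_eq {T : Type*} [Nonempty T] {f g : ι → T → ℝ}
    {M : ℝ} (k : ι) (hg : ∀ i t, |g i t| ≤ M) (hfg : ∀ i ≠ k, f i = g i)
    (hk : ∀ t t', |f k t - f k t'| ≤ |g k t - g k t'|) :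
    ∑ σ : ι → Bool, ⨆ t, ∑ i, boolSign (σ i) * f i t
      ≤ ∑ σ : ι → Bool, ⨆ t, ∑ i, boolSign (σ i) * g i t := by
  set S : (ι → T → ℝ) → (ι → Bool) → ℝ := fun h σ => ⨆ t, ∑ i, boolSign (σ i) * h i t
  -- pair each sign vector with the one differing from it in the `k`-th sign
  have hpair : ∀ σ, S f σ + S f (flipAt k σ) ≤ S g σ + S g (flipAt k σ) := fun σ => by
    have hA : ∀ t, ∑ i ∈ univ.erase k, boolSign (σ i) * g i t
        = ∑ i ∈ univ.erase k, boolSign (σ i) * f i t := fun t =>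
      sum_congr rfl fun i hi => by rw [hfg i (ne_of_mem_erase hi)]
    have hb₁ := bddAbove_range_sum_boolSign_mul hg σ
    have hb₂ := bddAbove_range_sum_boolSign_mul hg (flipAt k σ)
    simp only [S, sum_boolSign_mul_eq σ k, sum_boolSign_flipAt_mul_eq σ k, hA] at hb₁ hb₂ ⊢
    refine ciSup_add_add_ciSup_sub_le hb₁ hb₂ fun t t' => ?_
    rw [← mul_sub, ← mul_sub, abs_mul, abs_mul, abs_boolSign, one_mul, one_mul]
    exact hk t t'
  have := sum_le_sum fun σ (_ : σ ∈ univ) => hpair σ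
  rw [sum_add_distrib, sum_add_distrib, Equiv.sum_comp (flipAt k) (S f),
    Equiv.sum_comp (flipAt k) (S g)] at this
  linarith

-- The Ledoux–Talagrand contraction principle.
theorem sum_iSup_sum_boolSign_mul_le {T : Type*} [Nonempty T] {f g : ι → T → ℝ} {M : ℝ}
    (hf : ∀ i t, |f i t| ≤ M) (hg : ∀ i t, |g i t| ≤ M)
    (hfg : ∀ i t t', |f i t - f i t'| ≤ |g i t - g i t'|) :
    ∑ σ : ι → Bool, ⨆ t, ∑ i, boolSign (σ i) * f i t
      ≤ ∑ σ : ι → Bool, ⨆ t, ∑ i, boolSign (σ i) * g i t := by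
  let mix : Finset ι → ι → T → ℝ := fun S i => if i ∈ S then g i else f i
  have hmix : ∀ S i t, |mix S i t| ≤ M := fun S i t => by
    by_cases h : i ∈ S <;> simp [mix, h, hf i t, hg i t]
  suffices ∀ S : Finset ι, ∑ σ : ι → Bool, ⨆ t, ∑ i, boolSign (σ i) * f i t
      ≤ ∑ σ : ι → Bool, ⨆ t, ∑ i, boolSign (σ i) * mix S i t by
    simpa [mix] using this univ
  intro S
  induction S using Finset.induction_on with
  | empty => simp [mix]
  | insert k S hk ih =>
    refine ih.trans (sum_iSup_sum_boolSign_mul_le_of_forall_ne_eq k (hmix _) (fun i hi => ?_) ?_)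
    · simp [mix, hi]
    · simpa [mix, hk] using hfg k

lemma sum_boolSign_mul_boolSign (i j : ι) :
    ∑ σ : ι → Bool, boolSign (σ i) * boolSign (σ j) = if i = j then 2 ^ Fintype.card ι else 0 := by
  split_ifs with h
  · simp [h]
  · have := Equiv.sum_comp (flipAt i) fun σ => boolSign (σ i) * boolSign (σ j)
    simp only [flipAt_apply_self, flipAt_apply_of_ne (Ne.symm h), boolSign_not, neg_mul,
      sum_neg_distrib] at this
    linarith

section InnerProductSpace

variable {E : Type*} [NormedAddCommGroup E] [InnerProductSpace ℝ E]

lemma exists_abs_sig_sub_le_mul {r s : ℝ} (hr : 0 < r) (hs : 0 < s) (y : E) :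
    ∃ K, 0 ≤ K ∧ K * ‖y‖ ≤ 8 * r / s + 1 / r ∧ ∀ u u' : E, ‖u‖ = r → ‖u'‖ = r →
      |sig s (2 * ⟪y, u⟫ - ‖y‖ ^ 2) - sig s (2 * ⟪y, u'⟫ - ‖y‖ ^ 2)| ≤ K * |⟪y, u⟫ - ⟪y, u'⟫| := by
  have hdiff : ∀ u u' : E, |(2 * ⟪y, u⟫ - ‖y‖ ^ 2) - (2 * ⟪y, u'⟫ - ‖y‖ ^ 2)|
      = 2 * |⟪y, u⟫ - ⟪y, u'⟫| := fun u u' => by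
    rw [sub_sub_sub_cancel_right, ← mul_sub, abs_mul, abs_two]
  by_cases hy : ‖y‖ ≤ 4 * r
  · refine ⟨2 / s, by positivity, ?_, fun u u' _ _ => ?_⟩
    · have : 2 / s * ‖y‖ ≤ 8 * r / s := by
        rw [div_mul_eq_mul_div]
        exact div_le_div_of_nonneg_right (by linarith) hs.le
      linarith [show 0 < 1 / r by positivity]
    · calc _ ≤ _ := abs_sig_sub_le hs _ _
        _ = _ := by rw [hdiff]; ring
  · push Not at hy
    set m := 2 * r * ‖y‖ - ‖y‖ ^ 2
    have hy0 : 0 < ‖y‖ := by linarith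
    refine ⟨2 / s * Real.exp (m / s), by positivity, ?_, fun u u' hu hu' => ?_⟩
    · -- the sigmoid is exponentially flat where its argument is at most `m ≤ -‖y‖² / 2`
      have hexp : Real.exp (m / s) ≤ (‖y‖ ^ 2 / (2 * s))⁻¹ := by
        refine (Real.exp_le_exp.2 ?_).trans (exp_neg_le_inv (by positivity))
        rw [div_le_iff₀ hs, neg_mul, div_mul_eq_mul_div, mul_div_mul_right _ _ hs.ne']
        nlinarith
      calc 2 / s * Real.exp (m / s) * ‖y‖ ≤ 2 / s * (‖y‖ ^ 2 / (2 * s))⁻¹ * ‖y‖ := by gcongr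
        _ = 4 / ‖y‖ := by field_simp; ring
        _ ≤ 1 / r := by rw [div_le_div_iff₀ hy0 hr]; linarith
        _ ≤ 8 * r / s + 1 / r := by linarith [show 0 < 8 * r / s by positivity]
    · have hm : ∀ v : E, ‖v‖ = r → 2 * ⟪y, v⟫ - ‖y‖ ^ 2 ≤ m := fun v hv => by
        have := real_inner_le_norm y v
        rw [hv] at this
        linarith
      calc _ ≤ _ := abs_sig_sub_le_exp hs (hm u hu) (hm u' hu')
        _ = _ := by rw [hdiff]; ring

lemma sum_norm_sum_boolSign_smul_sq (v : ι → E) :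
    ∑ σ : ι → Bool, ‖∑ i, boolSign (σ i) • v i‖ ^ 2 = 2 ^ Fintype.card ι * ∑ i, ‖v i‖ ^ 2 := by
  have hexpand : ∀ σ : ι → Bool, ‖∑ i, boolSign (σ i) • v i‖ ^ 2
      = ∑ i, ∑ j, boolSign (σ i) * boolSign (σ j) * ⟪v i, v j⟫ := fun σ => by
    simp only [← real_inner_self_eq_norm_sq, sum_inner, inner_sum, real_inner_smul_left,
      real_inner_smul_right, mul_assoc]
    exact sum_congr rfl fun i _ => sum_congr rfl fun j _ => by rw [real_inner_comm]
  calc ∑ σ : ι → Bool, ‖∑ i, boolSign (σ i) • v i‖ ^ 2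
      = ∑ i, ∑ j, (∑ σ : ι → Bool, boolSign (σ i) * boolSign (σ j)) * ⟪v i, v j⟫ := by
        simp only [hexpand, sum_mul]
        rw [sum_comm]
        exact sum_congr rfl fun i _ => sum_comm
    _ = 2 ^ Fintype.card ι * ∑ i, ‖v i‖ ^ 2 := by
        simp [sum_boolSign_mul_boolSign, ite_mul, mul_sum]

lemma sum_norm_sum_boolSign_smul_le (v : ι → E) :
    ∑ σ : ι → Bool, ‖∑ i, boolSign (σ i) • v i‖ ≤ 2 ^ Fintype.card ι * √(∑ i, ‖v i‖ ^ 2) := by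
  have hcard : ((univ : Finset (ι → Bool)).card : ℝ) = 2 ^ Fintype.card ι := by
    simp
  rw [← pow_le_pow_iff_left₀ (sum_nonneg fun _ _ => norm_nonneg _) (by positivity) two_ne_zero,
    mul_pow, Real.sq_sqrt (sum_nonneg fun _ _ => by positivity)]
  calc (∑ σ : ι → Bool, ‖∑ i, boolSign (σ i) • v i‖) ^ 2
      ≤ (univ : Finset (ι → Bool)).card * ∑ σ : ι → Bool, ‖∑ i, boolSign (σ i) • v i‖ ^ 2 :=
        sq_sum_le_card_mul_sum_sq
    _ = (2 ^ Fintype.card ι) ^ 2 * ∑ i, ‖v i‖ ^ 2 := by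
        rw [hcard, sum_norm_sum_boolSign_smul_sq]; ring

lemma iSup_sphere_inner_le {r : ℝ} [Nonempty (Metric.sphere (0 : E) r)] (w : E) :
    ⨆ u : Metric.sphere (0 : E) r, ⟪w, (u : E)⟫ ≤ r * ‖w‖ :=
  ciSup_le fun u => (real_inner_le_norm w u).trans (by rw [norm_eq_of_mem_sphere u, mul_comm])

theorem sum_iSup_sphere_sum_boolSign_mul_sig_le {r s : ℝ} (hr : 0 < r) (hs : 0 < s)
    (y : ι → E) :
    ∑ σ : ι → Bool, ⨆ u : Metric.sphere (0 : E) r,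
        ∑ i, boolSign (σ i) * sig s (2 * ⟪y i, (u : E)⟫ - ‖y i‖ ^ 2)
      ≤ 2 ^ Fintype.card ι * ((8 * r / s + 1 / r) * r * √(Fintype.card ι)) := by
  set B := 8 * r / s + 1 / r
  rcases isEmpty_or_nonempty (Metric.sphere (0 : E) r) with hT | hT
  · simp only [Real.iSup_of_isEmpty, sum_const_zero]
    positivity
  choose K hK₀ hKy hK using fun i => exists_abs_sig_sub_le_mul hr hs (y i)
  have hlin : ∀ i (u : Metric.sphere (0 : E) r), |K i * ⟪y i, (u : E)⟫| ≤ B * r := fun i u => by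
    rw [abs_mul, abs_of_nonneg (hK₀ i)]
    have hu : |⟪y i, (u : E)⟫| ≤ ‖y i‖ * r :=
      (abs_real_inner_le_norm _ _).trans_eq (by rw [norm_eq_of_mem_sphere u])
    calc K i * |⟪y i, (u : E)⟫| ≤ K i * ‖y i‖ * r := by
          rw [mul_assoc]; exact mul_le_mul_of_nonneg_left hu (hK₀ i)
      _ ≤ B * r := mul_le_mul_of_nonneg_right (hKy i) hr.le
  have hKyB : ∀ i, ‖K i • y i‖ ≤ B := fun i => by
    rw [norm_smul, Real.norm_of_nonneg (hK₀ i)]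
    exact hKy i
  calc ∑ σ : ι → Bool, ⨆ u : Metric.sphere (0 : E) r,
        ∑ i, boolSign (σ i) * sig s (2 * ⟪y i, (u : E)⟫ - ‖y i‖ ^ 2)
      ≤ ∑ σ : ι → Bool, ⨆ u : Metric.sphere (0 : E) r,
          ∑ i, boolSign (σ i) * (K i * ⟪y i, (u : E)⟫) :=
        sum_iSup_sum_boolSign_mul_le (M := max 1 (B * r))
          (fun i u => (abs_sig_le_one _ _).trans (le_max_left _ _))
          (fun i u => (hlin i u).trans (le_max_right _ _))
          (fun i u u' => (hK i u u' (norm_eq_of_mem_sphere u) (norm_eq_of_mem_sphere u')).trans_eq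
            (by rw [← abs_of_nonneg (hK₀ i), ← abs_mul, abs_of_nonneg (hK₀ i), mul_sub]))
    _ ≤ ∑ σ : ι → Bool, r * ‖∑ i, boolSign (σ i) • K i • y i‖ := by
        refine sum_le_sum fun σ _ => le_of_eq_of_le ?_ (iSup_sphere_inner_le _)
        simp only [sum_inner, real_inner_smul_left]
    _ ≤ r * (2 ^ Fintype.card ι * √(∑ _i : ι, B ^ 2)) := by
        rw [← mul_sum]
        gcongr
        refine (sum_norm_sum_boolSign_smul_le _).trans ?_
        gcongr with i
        exact hKyB i
    _ = 2 ^ Fintype.card ι * (B * r * √(Fintype.card ι)) := by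
        rw [sum_const, card_univ, nsmul_eq_mul, Real.sqrt_mul (Nat.cast_nonneg _),
          Real.sqrt_sq (by positivity)]
        ring

end InnerProductSpace

end Signs

lemma integral_le_of_forall_le {α : Type*} [MeasurableSpace α] {μ : Measure α}
    [IsProbabilityMeasure μ] {f : α → ℝ} {C : ℝ} (hC : 0 ≤ C) (h : ∀ x, f x ≤ C) :
    ∫ x, f x ∂μ ≤ C := by
  by_cases hf : Integrable f μ
  · simpa using integral_mono hf (integrable_const C) h
  · rwa [integral_undef hf]

instance : IsProbabilityMeasure signMeasure := PMF.toMeasure.isProbabilityMeasure _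

lemma integral_pi_signMeasure {n : ℕ} (ψ : (Fin n → Bool) → ℝ) :
    ∫ σ, ψ σ ∂(Measure.pi fun _ => signMeasure) = 2⁻¹ ^ n * ∑ σ, ψ σ := by
  have hσ : ∀ σ : Fin n → Bool, (Measure.pi fun _ => signMeasure).real {σ} = 2⁻¹ ^ n := by
    simp [measureReal_def, signMeasure]
  simp [integral_fintype Integrable.of_finite, hσ, mul_sum]

lemma radComp_le_of_forall_sum_iSup_le {E : Type*} [MeasurableSpace E] {P : Measure E}
    [IsProbabilityMeasure P] {n : ℕ} {F : Set (E → ℝ)} {D : ℝ} (hD : 0 ≤ D)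
    (h : ∀ x : Fin n → E,
      ∑ σ : Fin n → Bool, ⨆ f : F, ∑ i, boolSign (σ i) * (f : E → ℝ) (x i) ≤ 2 ^ n * D) :
    radComp P n F ≤ D / n := by
  refine integral_le_of_forall_le (by positivity) fun x => ?_
  simp only [integral_pi_signMeasure, ← Real.mul_iSup_of_nonneg (inv_nonneg.2 n.cast_nonneg)]
  calc 2⁻¹ ^ n * ∑ σ : Fin n → Bool, (n : ℝ)⁻¹ * ⨆ f : F, ∑ i, boolSign (σ i) * (f : E → ℝ) (x i)
      = 2⁻¹ ^ n * (n : ℝ)⁻¹ *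
          ∑ σ : Fin n → Bool, ⨆ f : F, ∑ i, boolSign (σ i) * (f : E → ℝ) (x i) := by
        rw [← mul_sum, mul_assoc]
    _ ≤ 2⁻¹ ^ n * (n : ℝ)⁻¹ * (2 ^ n * D) := by gcongr; exact h x
    _ = D / n := by rw [mul_right_comm, ← mul_assoc, ← mul_pow]; norm_num [div_eq_mul_inv]

lemma radComp_empty {E : Type*} [MeasurableSpace E] (P : Measure E) (n : ℕ) :
    radComp P n ∅ = 0 := by
  simp [radComp]

lemma Fz_zero_eq_empty {r : ℝ} (hr : r ≠ 0) (s : ℝ) (z : EuclideanSpace ℝ (Fin 0)) :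
    Fz 0 r s z = ∅ :=
  Set.eq_empty_of_forall_notMem fun _ ⟨c, hc, _⟩ =>
    hr (by simpa [Subsingleton.elim c z] using hc.symm)

lemma sum_iSup_Fz_le {d n : ℕ} (z : EuclideanSpace ℝ (Fin d)) {r s : ℝ} (hr : 0 < r)
    (hs : 0 < s) (x : Fin n → EuclideanSpace ℝ (Fin d)) :
    ∑ σ : Fin n → Bool, ⨆ f : Fz d r s z, ∑ i, boolSign (σ i) * (f : _ → ℝ) (x i)
      ≤ 2 ^ n * ((8 * r / s + 1 / r) * r * √n) := by
  let φ : Metric.sphere (0 : EuclideanSpace ℝ (Fin d)) r → Fz d r s z := fun u =>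
    ⟨fun x => sig s (r ^ 2 - ‖x - (z + u)‖ ^ 2), z + u, by simp [norm_eq_of_mem_sphere u], rfl⟩
  have hφ : Function.Surjective φ := by
    rintro ⟨f, c, hc, rfl⟩
    exact ⟨⟨c - z, by simpa using hc⟩, by simp [φ]⟩
  have harg : ∀ (y : EuclideanSpace ℝ (Fin d)) (u : Metric.sphere (0 : EuclideanSpace ℝ (Fin d)) r),
      r ^ 2 - ‖y - (z + u)‖ ^ 2 = 2 * ⟪y - z, (u : EuclideanSpace ℝ (Fin d))⟫ - ‖y - z‖ ^ 2 :=
    fun y u => by rw [← sub_sub, norm_sub_sq_real, norm_eq_of_mem_sphere u]; ring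
  calc _ = ∑ σ : Fin n → Bool, ⨆ u : Metric.sphere (0 : EuclideanSpace ℝ (Fin d)) r,
        ∑ i, boolSign (σ i) *
          sig s (2 * ⟪x i - z, (u : EuclideanSpace ℝ (Fin d))⟫ - ‖x i - z‖ ^ 2) := by
        refine sum_congr rfl fun σ _ => ?_
        rw [← hφ.iSup_comp]
        simp [φ, harg]
    _ ≤ _ := by simpa using sum_iSup_sphere_sum_boolSign_mul_sig_le hr hs fun i => x i - z

/-- The Rademacher complexity of `F_z` is `O(√(d/n))`, with a constant depending only on
`r` and `s`. -/
theorem stmt_11 (d : ℕ) (z : EuclideanSpace ℝ (Fin d)) (r s : ℝ) (hr : 0 < r) (hs : 0 < s) :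
    ∃ C > (0 : ℝ), ∀ (P : Measure (EuclideanSpace ℝ (Fin d))), IsProbabilityMeasure P →
      ∀ n : ℕ, 1 ≤ n → radComp P n (Fz d r s z) ≤ C * Real.sqrt (d / n) := by
  refine ⟨(8 * r / s + 1 / r) * r, by positivity, fun P _ n _ => ?_⟩
  rcases Nat.eq_zero_or_pos d with rfl | hd
  · rw [Fz_zero_eq_empty hr.ne', radComp_empty]
    positivity
  calc radComp P n (Fz d r s z) ≤ (8 * r / s + 1 / r) * r * √n / n :=
        radComp_le_of_forall_sum_iSup_le (by positivity) (sum_iSup_Fz_le z hr hs)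
    _ ≤ (8 * r / s + 1 / r) * r * Real.sqrt (d / n) := by
        rw [mul_div_assoc, Real.sqrt_div_self', Real.sqrt_div' _ (Nat.cast_nonneg n)]
        gcongr
        exact Real.one_le_sqrt.2 (by exact_mod_cast hd)
end

section
/- Let μ be a probability measure on ℝ^d, z ∈ ℝ^d, r > 0 and s > 0, and let X_1, X_2, … be i.i.d. random vectors with law μ. Then almost surely, SD^r_s(z | X_{1:n}) → SD^r_s(z | μ) as n → ∞, where SD^r_s(z | X_{1:n}) denotes the sphere depth of the empirical measure of the first n samples. -/
open MeasureTheory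

/-- The (smoothed, `s > 0`) sphere depth
`SD^r_s(z|μ) = inf_{‖c−z‖=r} ∫ sig_s(r² − ‖x − c‖²) dμ(x)`. -/
noncomputable def SDs (d : ℕ) (r s : ℝ) (z : EuclideanSpace ℝ (Fin d))
    (μ : Measure (EuclideanSpace ℝ (Fin d))) : ℝ :=
  ⨅ c : Metric.sphere z r, ∫ x, sig s (r ^ 2 - ‖x - (c : EuclideanSpace ℝ (Fin d))‖ ^ 2) ∂μ

/-- The sphere depth of the empirical measure of the samples `x₁,…,xₙ`:
`SD^r_s(z|x_{1:n}) = inf_{‖c−z‖=r} (1/n) Σᵢ sig_s(r² − ‖xᵢ − c‖²)`. -/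
noncomputable def SDemp (d : ℕ) (r s : ℝ) (z : EuclideanSpace ℝ (Fin d)) (n : ℕ)
    (x : Fin n → EuclideanSpace ℝ (Fin d)) : ℝ :=
  ⨅ c : Metric.sphere z r,
    (n : ℝ)⁻¹ * ∑ i, sig s (r ^ 2 - ‖x i - (c : EuclideanSpace ℝ (Fin d))‖ ^ 2)

open Filter Topology ProbabilityTheory Set
open scoped NNReal

/-! For a fixed centre `c` the integrand `x ↦ sig s (r² - ‖x - c‖²)` is bounded, so the strong
law of large numbers gives almost sure convergence of the empirical means at every point of a
countable dense subset of the sphere. The Gaussian decay of `sig s (r² - t²)` beats the linear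
growth of the derivative of `r² - t²`, so the integrand is Lipschitz in `c` uniformly in `x`. Hence
the empirical means form an equicontinuous family on the compact sphere; pointwise convergence on
a dense set upgrades to uniform convergence, and uniform convergence passes to the infima. -/

lemma sig_eq_sigmoid (s t : ℝ) : sig s t = Real.sigmoid (t / s) := by
  rw [sig, Real.sigmoid_def, one_div, neg_div]

lemma Real.sigmoid_le_exp (x : ℝ) : Real.sigmoid x ≤ Real.exp x := by
  rw [Real.sigmoid_def, ← inv_inv (Real.exp x), ← Real.exp_neg]
  exact inv_anti₀ (Real.exp_pos _) (le_add_of_nonneg_left zero_le_one)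

theorem lipschitzWith_sig_sub_sq {s : ℝ} (hs : 0 < s) (r : ℝ) :
    LipschitzWith (2 * Real.exp (r ^ 2 / s) / √s).toNNReal (fun t => sig s (r ^ 2 - t ^ 2)) := by
  have hderiv : ∀ t, HasDerivAt (fun t => sig s (r ^ 2 - t ^ 2))
      (Real.sigmoid ((r ^ 2 - t ^ 2) / s) * (1 - Real.sigmoid ((r ^ 2 - t ^ 2) / s))
        * (-(2 * t) / s)) t := fun t => by
    simp only [sig_eq_sigmoid]
    exact (Real.hasDerivAt_sigmoid _).comp t
      (by simpa using ((hasDerivAt_pow 2 t).const_sub (r ^ 2)).div_const s)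
  refine lipschitzWith_of_nnnorm_deriv_le (fun t => (hderiv t).differentiableAt) fun t => ?_
  rw [(hderiv t).deriv, ← NNReal.coe_le_coe, coe_nnnorm, Real.coe_toNNReal _ (by positivity)]
  set σ := Real.sigmoid ((r ^ 2 - t ^ 2) / s)
  have hσ : σ ≤ Real.exp (r ^ 2 / s) * Real.exp (-(s⁻¹ * t * t)) := by
    rw [← Real.exp_add]
    convert Real.sigmoid_le_exp _ using 2
    ring
  have hdecay : |t| * Real.exp (-(s⁻¹ * t * t)) ≤ √s := by
    simpa [Real.mulExpNegMulSq, abs_mul, Real.sqrt_inv] using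
      Real.abs_mulExpNegMulSq_le (inv_pos.2 hs) (x := t)
  have hσ₀ : 0 ≤ σ := Real.sigmoid_nonneg _
  have hσ₁ : σ ≤ 1 := Real.sigmoid_le_one _
  calc ‖σ * (1 - σ) * (-(2 * t) / s)‖ = σ * (1 - σ) * (2 / s * |t|) := by
        rw [norm_mul, Real.norm_of_nonneg (by nlinarith), Real.norm_eq_abs, abs_div, abs_neg,
          abs_mul, abs_two, abs_of_pos hs]
        ring
    _ ≤ σ * (2 / s * |t|) := by gcongr; nlinarith
    _ ≤ Real.exp (r ^ 2 / s) * Real.exp (-(s⁻¹ * t * t)) * (2 / s * |t|) := by gcongr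
    _ = 2 / s * Real.exp (r ^ 2 / s) * (|t| * Real.exp (-(s⁻¹ * t * t))) := by ring
    _ ≤ 2 / s * Real.exp (r ^ 2 / s) * √s := by gcongr
    _ = 2 * Real.exp (r ^ 2 / s) / √s := by
        have := Real.mul_self_sqrt hs.le
        field_simp
        linarith

theorem lipschitzWith_sig_sub_norm_sq {E : Type*} [SeminormedAddCommGroup E] {s : ℝ} (hs : 0 < s)
    (r : ℝ) (x : E) :
    LipschitzWith (2 * Real.exp (r ^ 2 / s) / √s).toNNReal
      (fun c : E => sig s (r ^ 2 - ‖x - c‖ ^ 2)) := by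
  simpa [Function.comp_def, dist_eq_norm] using
    (lipschitzWith_sig_sub_sq hs r).comp (LipschitzWith.dist_right x)

theorem lipschitzWith_integral {X α E : Type*} [PseudoMetricSpace X] [MeasurableSpace α]
    [NormedAddCommGroup E] [NormedSpace ℝ E] {μ : Measure α} [IsProbabilityMeasure μ]
    {K : ℝ≥0} {f : X → α → E} (hf : ∀ a, LipschitzWith K (f · a))
    (hint : ∀ c, Integrable (f c) μ) :
    LipschitzWith K (fun c => ∫ a, f c a ∂μ) := by
  refine LipschitzWith.of_dist_le_mul fun c c' => ?_
  rw [dist_eq_norm, ← integral_sub (hint c) (hint c')]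
  simpa using norm_integral_le_of_norm_le_const (μ := μ)
    (Eventually.of_forall fun a => (dist_eq_norm (f c a) (f c' a)) ▸ (hf a).dist_le_mul c c')

theorem lipschitzWith_mean {X ι : Type*} [PseudoMetricSpace X] [Fintype ι] {K : ℝ≥0}
    {f : ι → X → ℝ} (hf : ∀ i, LipschitzWith K (f i)) :
    LipschitzWith K (fun c => (Fintype.card ι : ℝ)⁻¹ * ∑ i, f i c) := by
  refine LipschitzWith.of_dist_le_mul fun c c' => ?_
  rw [Real.dist_eq, ← mul_sub, ← Finset.sum_sub_distrib, abs_mul, abs_inv, Nat.abs_cast]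
  calc (Fintype.card ι : ℝ)⁻¹ * |∑ i, (f i c - f i c')|
      ≤ (Fintype.card ι : ℝ)⁻¹ * ∑ _i : ι, K * dist c c' := by
        gcongr
        exact (Finset.abs_sum_le_sum_abs _ _).trans
          (Finset.sum_le_sum fun i _ => Real.dist_eq (f i c) (f i c') ▸ (hf i).dist_le_mul c c')
    _ ≤ K * dist c c' := by
        rw [Finset.sum_const, Finset.card_univ, nsmul_eq_mul, ← mul_assoc]
        exact mul_le_of_le_one_left (by positivity) (inv_mul_le_one_of_le₀ le_rfl (by positivity))

theorem dist_ciInf_ciInf_le {ι : Type*} [Nonempty ι] {f g : ι → ℝ} (hf : BddBelow (range f))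
    {ε : ℝ} (h : ∀ i, dist (f i) (g i) ≤ ε) : dist (⨅ i, f i) (⨅ i, g i) ≤ ε := by
  have hfg : ∀ i, f i ≤ g i + ε ∧ g i ≤ f i + ε := fun i => by
    have := abs_sub_le_iff.1 (Real.dist_eq (f i) (g i) ▸ h i); constructor <;> linarith
  have hg : BddBelow (range g) := by
    obtain ⟨m, hm⟩ := hf
    exact ⟨m - ε, forall_mem_range.2 fun i => by linarith [hm (mem_range_self i), (hfg i).1]⟩
  rw [Real.dist_eq, abs_sub_le_iff, sub_le_comm, sub_le_comm (a := ⨅ i, g i)]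
  exact ⟨le_ciInf fun i => by linarith [ciInf_le hf i, (hfg i).1],
    le_ciInf fun i => by linarith [ciInf_le hg i, (hfg i).2]⟩

theorem TendstoUniformly.tendsto_ciInf {ι X : Type*} {l : Filter ι} {F : ι → X → ℝ} {f : X → ℝ}
    (hf : BddBelow (range f)) (h : TendstoUniformly F f l) :
    Tendsto (fun i => ⨅ x, F i x) l (𝓝 (⨅ x, f x)) := by
  cases isEmpty_or_nonempty X
  · simpa only [Real.iInf_of_isEmpty] using tendsto_const_nhds
  refine Metric.tendsto_nhds.2 fun ε hε => ?_
  filter_upwards [Metric.tendstoUniformly_iff.1 h (ε / 2) (half_pos hε)] with i hi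
  exact ((dist_ciInf_ciInf_le hf fun x => (hi x).le).trans_lt
    (half_lt_self hε)).trans_eq' (dist_comm _ _)

theorem Equicontinuous.tendstoUniformly_of_tendsto_dense {ι X α : Type*} [TopologicalSpace X]
    [CompactSpace X] [UniformSpace α] {l : Filter ι} {F : ι → X → α} {f : X → α}
    (hF : Equicontinuous F) (hf : Continuous f) {D : Set X} (hD : Dense D)
    (h : ∀ x ∈ D, Tendsto (F · x) l (𝓝 (f x))) : TendstoUniformly F f l := by
  have hall : ∀ x, Tendsto (F · x) l (𝓝 (f x)) := fun x =>
    (hF.isClosed_setOfPred_tendsto hf).closure_subset_iff.2 h (hD x)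
  exact UniformFun.tendsto_iff_tendstoUniformly.1
    ((hF.tendsto_uniformFun_iff_pi l f).2 (tendsto_pi_nhds.2 hall))

theorem tendsto_ciInf_of_lipschitzWith_of_tendsto_dense {ι X : Type*} [PseudoMetricSpace X]
    [CompactSpace X] {l : Filter ι} {K : ℝ≥0} {F : ι → X → ℝ} {f : X → ℝ}
    (hF : ∀ i, LipschitzWith K (F i)) (hf : Continuous f) {D : Set X} (hD : Dense D)
    (h : ∀ x ∈ D, Tendsto (F · x) l (𝓝 (f x))) :
    Tendsto (fun i => ⨅ x, F i x) l (𝓝 (⨅ x, f x)) :=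
  ((LipschitzWith.uniformEquicontinuous F K hF).equicontinuous.tendstoUniformly_of_tendsto_dense
    hf hD h).tendsto_ciInf (isCompact_range hf).bddBelow

theorem strong_law_ae_comp {Ω E : Type*} [MeasurableSpace Ω] [MeasurableSpace E]
    {P : Measure Ω} {μ : Measure E} {X : ℕ → Ω → E} (hXmeas : ∀ i, Measurable (X i))
    (hXlaw : ∀ i, P.map (X i) = μ) (hXindep : Pairwise fun i j => IndepFun (X i) (X j) P)
    {f : E → ℝ} (hf : Measurable f) (hfi : Integrable f μ) :
    ∀ᵐ ω ∂P, Tendsto (fun n : ℕ => (n : ℝ)⁻¹ * ∑ i : Fin n, f (X i ω)) atTop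
      (𝓝 (∫ x, f x ∂μ)) := by
  have hident : ∀ i, IdentDistrib (f ∘ X i) (f ∘ X 0) P P := fun i =>
    IdentDistrib.comp
      ⟨(hXmeas i).aemeasurable, (hXmeas 0).aemeasurable, by rw [hXlaw i, hXlaw 0]⟩ hf
  rw [← hXlaw 0] at hfi ⊢
  have hint : Integrable (f ∘ X 0) P := hfi.comp_measurable (hXmeas 0)
  filter_upwards [strong_law_ae_real (fun i => f ∘ X i) hint
    (fun i j hij => (hXindep hij).comp hf hf) hident] with ω hω
  rw [integral_map (hXmeas 0).aemeasurable hf.aestronglyMeasurable]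
  simpa [Fin.sum_univ_eq_sum_range (fun i => f (X i ω)), div_eq_inv_mul] using hω

open ProbabilityTheory in
theorem stmt_14_general (d : ℕ) (μ : Measure (EuclideanSpace ℝ (Fin d))) [IsProbabilityMeasure μ]
    (z : EuclideanSpace ℝ (Fin d)) (r s : ℝ) (hs : 0 < s)
    {Ω : Type*} [MeasurableSpace Ω] (P : Measure Ω)
    (X : ℕ → Ω → EuclideanSpace ℝ (Fin d))
    (hXmeas : ∀ i, Measurable (X i)) (hXlaw : ∀ i, P.map (X i) = μ)
    (hXindep : iIndepFun X P) :
    ∀ᵐ ω ∂P, Filter.Tendsto (fun n : ℕ => SDemp d r s z n (fun i : Fin n => X i ω))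
      Filter.atTop (nhds (SDs d r s z μ)) := by
  let g : EuclideanSpace ℝ (Fin d) → Metric.sphere z r → ℝ :=
    fun x c => sig s (r ^ 2 - ‖x - c‖ ^ 2)
  obtain ⟨K, hg⟩ : ∃ K, ∀ x, LipschitzWith K (g x) := ⟨_, fun x =>
    ((lipschitzWith_sig_sub_norm_sq hs r x).comp (LipschitzWith.subtype_val _)).weaken
      (mul_one _).le⟩
  have hg_meas : ∀ c, Measurable (g · c) := fun c =>
    ((lipschitzWith_sig_sub_sq hs r).continuous.comp
      (continuous_id.sub continuous_const).norm).measurable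
  have hg_int : ∀ c, Integrable (g · c) μ := fun c =>
    .of_bound (hg_meas c).aestronglyMeasurable 1 (Eventually.of_forall fun x => by
      simp [g, sig_eq_sigmoid, abs_of_nonneg (Real.sigmoid_nonneg _), Real.sigmoid_le_one])
  obtain ⟨D, hD_countable, hD_dense⟩ := TopologicalSpace.exists_countable_dense (Metric.sphere z r)
  filter_upwards [(ae_ball_iff hD_countable).2 fun c _ => strong_law_ae_comp hXmeas hXlaw
    (fun i j hij => hXindep.indepFun hij) (hg_meas c) (hg_int c)] with ω hω
  unfold SDemp SDs
  refine tendsto_ciInf_of_lipschitzWith_of_tendsto_dense (K := K) (fun n => ?_)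
    (lipschitzWith_integral hg hg_int).continuous hD_dense hω
  simpa using lipschitzWith_mean fun i : Fin n => hg (X i ω)

open ProbabilityTheory in
/-- Strong consistency: for i.i.d. samples `X₁, X₂, … ~ μ`, the empirical sphere depth
converges almost surely to the population sphere depth. -/
theorem stmt_14 (d : ℕ) (μ : Measure (EuclideanSpace ℝ (Fin d))) [IsProbabilityMeasure μ]
    (z : EuclideanSpace ℝ (Fin d)) (r s : ℝ) (hr : 0 < r) (hs : 0 < s)
    {Ω : Type*} [MeasurableSpace Ω] (P : Measure Ω) [IsProbabilityMeasure P]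
    (X : ℕ → Ω → EuclideanSpace ℝ (Fin d))
    (hXmeas : ∀ i, Measurable (X i)) (hXlaw : ∀ i, P.map (X i) = μ)
    (hXindep : iIndepFun X P) :
    ∀ᵐ ω ∂P, Filter.Tendsto (fun n : ℕ => SDemp d r s z n (fun i : Fin n => X i ω))
      Filter.atTop (nhds (SDs d r s z μ)) :=
  stmt_14_general d μ z r s hs P X hXmeas hXlaw hXindep
end
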